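/- arXiv:2408.09740 — 4 statements merged into one kernel-verified Lean document; each statement's English description precedes it below -/
import Mathlib

section
/- Strong shift equivalence implies shift equivalence: if A and B are strong shift equivalent (related by a chain of elementary shift relations), then A and B are shift equivalent. -/
open Matrix

/-- Elementary shift relation: `A = RS` and `B = SR` for some rectangular `ℕ`-matrices. -/
def ElementaryShift (p q : Σ n : ℕ, Matrix (Fin n) (Fin n) ℕ) : Prop :=
  ∃ (R : Matrix (Fin p.1) (Fin q.1) ℕ) (S : Matrix (Fin q.1) (Fin p.1) ℕ),
    p.2 = R * S ∧ q.2 = S * R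

/-- Strong shift equivalence: the transitive closure of elementary shift relation. -/
def StrongShiftEquiv : (Σ n : ℕ, Matrix (Fin n) (Fin n) ℕ) →
    (Σ n : ℕ, Matrix (Fin n) (Fin n) ℕ) → Prop :=
  Relation.TransGen ElementaryShift

/-- Shift equivalence of square matrices over `ℕ`. -/
def ShiftEquiv (p q : Σ n : ℕ, Matrix (Fin n) (Fin n) ℕ) : Prop :=
  ∃ m : ℕ, 1 ≤ m ∧ ∃ (R : Matrix (Fin p.1) (Fin q.1) ℕ) (S : Matrix (Fin q.1) (Fin p.1) ℕ),
    p.2 ^ m = R * S ∧ q.2 ^ m = S * R ∧ q.2 * S = S * p.2 ∧ p.2 * R = R * q.2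

/-!
An elementary shift `A = RS`, `B = SR` is a shift equivalence of lag `1` witnessed by `(R, S)`.
Shift equivalences compose, with lags adding: if `(R₁, S₁)` has lag `m` from `A` to `B` and
`(R₂, S₂)` has lag `n` from `B` to `C`, then `(R₁R₂, S₂S₁)` has lag `m + n`, because the
intertwining `S₁A = BS₁` gives `A^(m+n) = R₁S₁Aⁿ = R₁BⁿS₁ = R₁R₂S₂S₁`.
-/

theorem Matrix.pow_mul_eq_mul_pow_of_mul_eq_mul {m n α : Type*} [Fintype m] [Fintype n]
    [DecidableEq m] [DecidableEq n] [Semiring α] {A : Matrix m m α} {B : Matrix n n α}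
    {R : Matrix m n α} (h : A * R = R * B) (k : ℕ) : A ^ k * R = R * B ^ k := by
  induction k with
  | zero => simp
  | succ k ih => rw [pow_succ, pow_succ, Matrix.mul_assoc, h, ← Matrix.mul_assoc, ih,
      Matrix.mul_assoc]

theorem ElementaryShift.shiftEquiv {p q : Σ n : ℕ, Matrix (Fin n) (Fin n) ℕ}
    (h : ElementaryShift p q) : ShiftEquiv p q := by
  obtain ⟨R, S, hRS, hSR⟩ := h
  refine ⟨1, le_rfl, R, S, by rwa [pow_one], by rwa [pow_one], ?_, ?_⟩ <;>
    rw [hRS, hSR, Matrix.mul_assoc]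

theorem ShiftEquiv.trans {p q r : Σ n : ℕ, Matrix (Fin n) (Fin n) ℕ}
    (hpq : ShiftEquiv p q) (hqr : ShiftEquiv q r) : ShiftEquiv p r := by
  obtain ⟨m, hm, R₁, S₁, hp, hq, hS₁, hR₁⟩ := hpq
  obtain ⟨n, -, R₂, S₂, hq', hr, hS₂, hR₂⟩ := hqr
  refine ⟨m + n, le_add_right hm, R₁ * R₂, S₂ * S₁, ?_, ?_, ?_, ?_⟩
  · calc p.2 ^ (m + n) = R₁ * S₁ * p.2 ^ n := by rw [pow_add, hp]
      _ = R₁ * (q.2 ^ n * S₁) := by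
        rw [Matrix.mul_assoc, pow_mul_eq_mul_pow_of_mul_eq_mul hS₁]
      _ = R₁ * R₂ * (S₂ * S₁) := by simp only [hq', Matrix.mul_assoc]
  · calc r.2 ^ (m + n) = S₂ * R₂ * r.2 ^ m := by rw [add_comm, pow_add, hr]
      _ = S₂ * (q.2 ^ m * R₂) := by
        rw [Matrix.mul_assoc, pow_mul_eq_mul_pow_of_mul_eq_mul hR₂]
      _ = S₂ * S₁ * (R₁ * R₂) := by simp only [hq, Matrix.mul_assoc]
  · rw [← Matrix.mul_assoc, hS₂, Matrix.mul_assoc, hS₁, Matrix.mul_assoc]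
  · rw [← Matrix.mul_assoc, hR₁, Matrix.mul_assoc, hR₂, Matrix.mul_assoc]

/-- Strong shift equivalence implies shift equivalence. -/
theorem strongShiftEquiv_imp_shiftEquiv (p q : Σ n : ℕ, Matrix (Fin n) (Fin n) ℕ)
    (h : StrongShiftEquiv p q) : ShiftEquiv p q := by
  induction h with
  | single h => exact h.shiftEquiv
  | tail _ h ih => exact ih.trans h.shiftEquiv
end

section
/- Every unitary correspondence isomorphism Φ : ₍f₎B → ₍g₎B between homomorphism correspondences equals M_u for a unique unitary multiplier u of B; consequently ₍f₎B ≅ ₍g₎B if and only if f and g are inner conjugate (g = Ad_u ∘ f for some unitary multiplier u). -/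
/-!
A linear bijection `Φ` of `B` with `Φ(b)⋆ Φ(c) = b⋆ c` is isometric, and together with
`b ↦ (Φ⁻¹(b⋆))⋆` it forms a double centralizer `u` with `(u⋆).fst = Φ⁻¹`, hence a unitary
multiplier. Conversely, left multiplication by a unitary multiplier is such a bijection and a right
`B`-module map. Since `‖u‖ = ‖u.fst‖` in a C⋆-algebra, a multiplier is determined by its left
action, which gives uniqueness; and left `A`-linearity of `b ↦ u b` is `g a = u (f a) u⋆` on `B`.
-/

open scoped MultiplierAlgebra

variable {A B : Type*} [NonUnitalCStarAlgebra A] [NonUnitalCStarAlgebra B]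

/-- `Φ : ₍f₎B → ₍g₎B` is a unitary correspondence isomorphism between the homomorphism
correspondences `₍f₎B` (with left `A`-action via `f`, right Hilbert `B`-module structure with
inner product `⟨b,b'⟩ = b* b'`) and `₍g₎B`. -/
def IsUnitaryCorrIso (f g : A →⋆ₙₐ[ℂ] B) (Φ : B → B) : Prop :=
  Function.Bijective Φ ∧ IsLinearMap ℂ Φ ∧
    (∀ b b' : B, Φ (b * b') = Φ b * b') ∧                 -- right `B`-module map
    (∀ b b' : B, star (Φ b) * Φ b' = star b * b') ∧       -- preserves the inner product
    (∀ (a : A) (b : B), Φ (f a * b) = g a * Φ b)          -- left `A`-module map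

namespace CStarRing

variable {E : Type*} [NonUnitalNormedRing E] [StarRing E] [CStarRing E]

theorem eq_of_forall_mul_eq {x y : E} (h : ∀ z, z * x = z * y) : x = y := by
  rw [← sub_eq_zero, ← star_mul_self_eq_zero_iff, mul_sub, h, sub_self]

theorem norm_eq_of_star_mul_self_eq {x y : E} (h : star x * x = star y * y) : ‖x‖ = ‖y‖ := by
  have h_norm := congrArg norm h
  rwa [norm_star_mul_self, norm_star_mul_self,
    mul_self_inj (norm_nonneg _) (norm_nonneg _)] at h_norm

end CStarRing

namespace DoubleCentralizer

theorem ext_fst {u v : 𝓜(ℂ, B)} (h : u.fst = v.fst) : u = v := by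
  rw [← sub_eq_zero, ← norm_eq_zero, ← norm_fst, sub_fst, h, sub_self, norm_zero]

theorem fst_mul (u : 𝓜(ℂ, B)) (b c : B) : u.fst (b * c) = u.fst b * c :=
  CStarRing.eq_of_forall_mul_eq fun y => by rw [← u.central, ← mul_assoc, u.central, mul_assoc]

section Unitary

variable {u : 𝓜(ℂ, B)} (hu : u ∈ unitary 𝓜(ℂ, B))
include hu

theorem star_fst_fst_of_mem_unitary (b : B) : (star u).fst (u.fst b) = b := by
  rw [← mul_apply_eq_comp, ← mul_fst, Unitary.star_mul_self_of_mem hu, one_fst, one_apply_eq_self]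

theorem fst_star_fst_of_mem_unitary (b : B) : u.fst ((star u).fst b) = b := by
  simpa using star_fst_fst_of_mem_unitary (Unitary.star_mem hu) b

theorem star_fst_mul_fst_of_mem_unitary (b c : B) : star (u.fst b) * u.fst c = star b * c := by
  rw [← u.central, ← star_star (u.snd _), ← star_fst, star_fst_fst_of_mem_unitary hu]

end Unitary

/-- The multiplier `λ_B⁻¹(Φ)` of a unitary `Φ` of the Hilbert module `B_B`. -/
noncomputable def ofStarMulPreserving (Φ : B ≃ₗ[ℂ] B)
    (hΦ : ∀ b c, star (Φ b) * Φ c = star b * c) : 𝓜(ℂ, B) :=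
  let U : B ≃ₗᵢ[ℂ] B := ⟨Φ, fun b => CStarRing.norm_eq_of_star_mul_self_eq (hΦ b b)⟩
  let S : B →L⋆[ℂ] B := (starₗᵢ ℂ : B ≃ₗᵢ⋆[ℂ] B)
  { fst := U
    snd := S.comp ((U.symm : B →L[ℂ] B).comp S)
    central := fun x y => by
      have h := hΦ (Φ.symm (star x)) y
      rw [Φ.apply_symm_apply, star_star] at h
      exact h.symm }

variable (Φ : B ≃ₗ[ℂ] B) (hΦ : ∀ b c, star (Φ b) * Φ c = star b * c)

@[simp]
theorem ofStarMulPreserving_fst (b : B) : (ofStarMulPreserving Φ hΦ).fst b = Φ b :=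
  rfl

@[simp]
theorem star_ofStarMulPreserving_fst (b : B) :
    (star (ofStarMulPreserving Φ hΦ)).fst b = Φ.symm b := by
  show star (star (Φ.symm (star (star b)))) = Φ.symm b
  rw [star_star, star_star]

theorem ofStarMulPreserving_mem_unitary : ofStarMulPreserving Φ hΦ ∈ unitary 𝓜(ℂ, B) := by
  refine Unitary.mem_iff.mpr ⟨ext_fst ?_, ext_fst ?_⟩ <;>
    ext b <;>
    simp only [mul_fst, mul_apply_eq_comp, one_fst, one_apply_eq_self, ofStarMulPreserving_fst,
      star_ofStarMulPreserving_fst, LinearEquiv.symm_apply_apply, LinearEquiv.apply_symm_apply]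

end DoubleCentralizer

open DoubleCentralizer

section

variable {f g : A →⋆ₙₐ[ℂ] B} {Φ : B → B}

noncomputable def IsUnitaryCorrIso.toLinearEquiv (hΦ : IsUnitaryCorrIso f g Φ) : B ≃ₗ[ℂ] B :=
  LinearEquiv.ofBijective (hΦ.2.1.mk' Φ) hΦ.1

theorem IsUnitaryCorrIso.exists_unitary_fst_eq (hΦ : IsUnitaryCorrIso f g Φ) :
    ∃ u ∈ unitary 𝓜(ℂ, B), ⇑u.fst = Φ :=
  ⟨ofStarMulPreserving hΦ.toLinearEquiv hΦ.2.2.2.1, ofStarMulPreserving_mem_unitary _ _, rfl⟩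

theorem isUnitaryCorrIso_fst_iff {u : 𝓜(ℂ, B)} (hu : u ∈ unitary 𝓜(ℂ, B)) :
    IsUnitaryCorrIso f g u.fst ↔ ∀ (a : A) (b : B), g a * b = u.fst (f a * (star u).fst b) := by
  refine ⟨fun hΦ a b => ?_, fun h => ⟨?_, u.fst.toLinearMap.isLinear, u.fst_mul,
    star_fst_mul_fst_of_mem_unitary hu, fun a b => ?_⟩⟩
  · rw [hΦ.2.2.2.2, fst_star_fst_of_mem_unitary hu]
  · exact Function.bijective_iff_has_inverse.mpr ⟨(star u).fst,
      star_fst_fst_of_mem_unitary hu, fst_star_fst_of_mem_unitary hu⟩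
  · rw [h, star_fst_fst_of_mem_unitary hu]

end

theorem isUnitaryCorrIso_eq_mul_left_general (f g : A →⋆ₙₐ[ℂ] B) :
    (∀ Φ : B → B, IsUnitaryCorrIso f g Φ →
      ∃! u : 𝓜(ℂ, B), u ∈ unitary 𝓜(ℂ, B) ∧ ∀ b : B, Φ b = u.fst b) ∧
    ((∃ Φ : B → B, IsUnitaryCorrIso f g Φ) ↔
      ∃ u ∈ unitary 𝓜(ℂ, B), ∀ (a : A) (b : B), g a * b = u.fst (f a * (star u).fst b)) := by
  refine ⟨fun Φ hΦ => ?_, ⟨fun ⟨Φ, hΦ⟩ => ?_, fun ⟨u, hu, h⟩ => ?_⟩⟩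
  · obtain ⟨u, hu, rfl⟩ := hΦ.exists_unitary_fst_eq
    refine ⟨u, ⟨hu, fun _ => rfl⟩, fun v ⟨_, hv⟩ => ext_fst ?_⟩
    ext b
    exact (hv b).symm
  · obtain ⟨u, hu, rfl⟩ := hΦ.exists_unitary_fst_eq
    exact ⟨u, hu, (isUnitaryCorrIso_fst_iff hu).1 hΦ⟩
  · exact ⟨u.fst, (isUnitaryCorrIso_fst_iff hu).2 h⟩

/-- Every unitary correspondence isomorphism `Φ : ₍f₎B → ₍g₎B` equals `M_u : b ↦ ub` for a unique
unitary multiplier `u` of `B`; consequently `₍f₎B ≅ ₍g₎B` if and only if `f` and `g` are inner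
conjugate, i.e. `g = Ad_u ∘ f` for some unitary multiplier `u`. -/
theorem isUnitaryCorrIso_eq_mul_left (f g : A →⋆ₙₐ[ℂ] B)
    (hf : Dense ((Submodule.span ℂ {x : B | ∃ a b, x = f a * b} : Submodule ℂ B) : Set B))
    (hg : Dense ((Submodule.span ℂ {x : B | ∃ a b, x = g a * b} : Submodule ℂ B) : Set B)) :
    (∀ Φ : B → B, IsUnitaryCorrIso f g Φ →
      ∃! u : 𝓜(ℂ, B), u ∈ unitary 𝓜(ℂ, B) ∧ ∀ b : B, Φ b = u.fst b) ∧
    ((∃ Φ : B → B, IsUnitaryCorrIso f g Φ) ↔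
      ∃ u ∈ unitary 𝓜(ℂ, B), ∀ (a : A) (b : B), g a * b = u.fst (f a * (star u).fst b)) :=
  isUnitaryCorrIso_eq_mul_left_general f g
end

section
/- With notation as above, the assignment (f, u) ↦ f_{⋊u} is functorial: for composable data f : A → B with unitary multiplier u (intertwining α, β) and g : B → C with unitary multiplier v (intertwining β, γ), one has g_{⋊v} ∘ f_{⋊u} = (g∘f)_{⋊ v g(u)}. -/
universe u v

/-- A presentation of the crossed product `A ⋊_α ℤ` of a unital C*-algebra `A` by a
*-automorphism `α`: a unital C*-algebra generated by a copy of `A` and a unitary `S`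
implementing `α`, which is universal for covariant representations, together with the
dual circle action fixing `A` and rescaling `S`. -/
structure CrossedProductZ (A : Type u) [CStarAlgebra A] (α : A ≃⋆ₐ[ℂ] A) where
  /-- The underlying C*-algebra of the crossed product. -/
  carrier : Type u
  [inst : CStarAlgebra carrier]
  /-- The canonical embedding of `A`. -/
  ι : A →⋆ₐ[ℂ] carrier
  ι_injective : Function.Injective ι
  /-- The canonical implementing unitary. -/
  S : carrier
  S_unitary : S ∈ unitary carrier
  /-- Covariance: `S a S* = α(a)`. -/
  covariant : ∀ a : A, S * ι a * star S = ι (α a)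
  /-- `A` and `S` generate the crossed product as a C*-algebra. -/
  generates :
    (StarAlgebra.adjoin ℂ (insert S (Set.range ι)) : StarSubalgebra ℂ carrier).topologicalClosure
      = ⊤
  /-- Universal property for covariant representations. -/
  universal : ∀ (D : Type v) [CStarAlgebra D] (π : A →⋆ₐ[ℂ] D) (V : D), V ∈ unitary D →
    (∀ a : A, V * π a * star V = π (α a)) →
    ∃ ρ : carrier →⋆ₐ[ℂ] D, ρ.comp ι = π ∧ ρ S = V
  /-- The dual action of the circle group. -/
  gauge : Circle → (carrier ≃⋆ₐ[ℂ] carrier)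
  gauge_one : gauge 1 = StarAlgEquiv.refl ℂ carrier
  gauge_mul : ∀ (z w : Circle) (x : carrier), gauge (z * w) x = gauge z (gauge w x)
  gauge_ι : ∀ (z : Circle) (a : A), gauge z (ι a) = ι a
  gauge_S : ∀ z : Circle, gauge z S = (z : ℂ) • S

attribute [instance] CrossedProductZ.inst

/-- Functoriality of the crossed-product construction: if `F = f_{⋊u}` and `G = g_{⋊v}` are the
*-homomorphisms of crossed products induced by `(f, u)` (intertwining `α, β`) and `(g, v)`
(intertwining `β, γ`), and `H = (g∘f)_{⋊ v g(u)}` is the one induced by `(g ∘ f, v g(u))`, then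
`G ∘ F = H`, i.e. `g_{⋊v} ∘ f_{⋊u} = (g∘f)_{⋊ v g(u)}`. -/
theorem crossedProduct_hom_comp {A B C : Type u}
    [CStarAlgebra A] [CStarAlgebra B] [CStarAlgebra C]
    (α : A ≃⋆ₐ[ℂ] A) (β : B ≃⋆ₐ[ℂ] B) (γ : C ≃⋆ₐ[ℂ] C)
    (CA : CrossedProductZ.{u, u} A α) (CB : CrossedProductZ.{u, u} B β)
    (CC : CrossedProductZ.{u, u} C γ)
    (f : A →⋆ₐ[ℂ] B) (u : B) (hu : u ∈ unitary B)
    (hcovf : ∀ a : A, β (f a) = u * f (α a) * star u)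
    (g : B →⋆ₐ[ℂ] C) (v : C) (hv : v ∈ unitary C)
    (hcovg : ∀ b : B, γ (g b) = v * g (β b) * star v)
    (F : CA.carrier →⋆ₐ[ℂ] CB.carrier)
    (hF : (∀ a : A, F (CA.ι a) = CB.ι (f a)) ∧ F CA.S = CB.S * CB.ι u)
    (G : CB.carrier →⋆ₐ[ℂ] CC.carrier)
    (hG : (∀ b : B, G (CB.ι b) = CC.ι (g b)) ∧ G CB.S = CC.S * CC.ι v)
    (H : CA.carrier →⋆ₐ[ℂ] CC.carrier)
    (hH : (∀ a : A, H (CA.ι a) = CC.ι (g (f a))) ∧ H CA.S = CC.S * CC.ι (v * g u)) :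
    G.comp F = H := by
  open scoped CStarAlgebra in
  obtain ⟨hFι, hFS⟩ := hF
  obtain ⟨hGι, hGS⟩ := hG
  obtain ⟨hHι, hHS⟩ := hH
  have heq : Set.EqOn (G.comp F) H (insert CA.S (Set.range CA.ι)) := by
    rintro x (rfl | ⟨a, rfl⟩)
    · simp only [StarAlgHom.comp_apply, hFS, map_mul, hGS, hGι, hHS, mul_assoc]
    · simp only [StarAlgHom.comp_apply, hFι, hGι, hHι]
  have hle : StarAlgebra.adjoin ℂ (insert CA.S (Set.range CA.ι)) ≤
      StarAlgHom.equalizer (G.comp F) H :=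
    StarAlgHom.adjoin_le_equalizer _ _ heq
  have hclosed : IsClosed ((StarAlgHom.equalizer (G.comp F) H : StarSubalgebra ℂ CA.carrier) :
      Set CA.carrier) :=
    isClosed_eq (map_continuous (G.comp F)) (map_continuous H)
  have htop : (StarAlgHom.equalizer (G.comp F) H : StarSubalgebra ℂ CA.carrier) = ⊤ := by
    rw [← top_le_iff, ← CA.generates]
    exact StarSubalgebra.topologicalClosure_minimal hle hclosed
  ext x
  exact StarAlgHom.mem_equalizer (G.comp F) H x |>.mp (htop ▸ trivial : x ∈ _)
end

section
/- If A and B are shift equivalent essential ℕ-matrices with lag m via R and S, then the dimension group homomorphisms induced by Rᵀ and Sᵀ on the inductive limits D_A = lim(ℤ^V, Aᵀ) and D_B = lim(ℤ^W, Bᵀ) are mutually inverse up to the shift automorphisms: the composition D_A → D_B → D_A equals d_A^m, where d_A is the automorphism of D_A induced by Aᵀ. -/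
open Matrix

/-- The connecting maps of the stationary inductive system `ℤ^V → ℤ^V → ⋯` with structure
matrix `M` (applied as `x ↦ M.mulVec x` at each stage). -/
noncomputable def connMaps {V : Type*} [Fintype V] [DecidableEq V] (M : Matrix V V ℤ) :
    ∀ i j : ℕ, i ≤ j → (V → ℤ) →ₗ[ℤ] (V → ℤ) :=
  fun i j _ => (M ^ (j - i)).mulVecLin

/-- The dimension group `D_M`: the inductive limit of `ℤ^V → ℤ^V → ⋯` along `M`. -/
noncomputable abbrev DimGroup {V : Type*} [Fintype V] [DecidableEq V] (M : Matrix V V ℤ) :=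
  Module.DirectLimit (fun _ : ℕ => V → ℤ) (connMaps M)

private lemma mapCast_mul {V W X : Type*} [Fintype W]
    (M : Matrix V W ℕ) (N : Matrix W X ℕ) :
    (M * N).map (Nat.cast : ℕ → ℤ) = M.map (Nat.cast : ℕ → ℤ) * N.map (Nat.cast : ℕ → ℤ) := by
  ext i j
  simp [Matrix.mul_apply, Matrix.map_apply]

private lemma mapCast_pow {V : Type*} [Fintype V] [DecidableEq V]
    (A : Matrix V V ℕ) (m : ℕ) :
    (A ^ m).map (Nat.cast : ℕ → ℤ) = (A.map (Nat.cast : ℕ → ℤ)) ^ m := by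
  induction m with
  | zero => simp [Matrix.map_one]
  | succ n ih => rw [pow_succ, pow_succ, mapCast_mul, ih]

/-- If `A` and `B` are shift equivalent essential `ℕ`-matrices with lag `m` via `R` and `S`,
then the homomorphisms of dimension groups `Φ : D_A → D_B` and `Ψ : D_B → D_A` induced by `Rᵀ`
and `Sᵀ` are mutually inverse up to the shift automorphisms: the composition `Ψ ∘ Φ` equals
`d_A^m`, where `d_A` is the automorphism of `D_A = lim (ℤ^V, Aᵀ)` induced by `Aᵀ`. -/
theorem dimensionGroup_comp_eq_pow_shift
    {V W : Type*} [Fintype V] [DecidableEq V] [Fintype W] [DecidableEq W]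
    (A : Matrix V V ℕ) (B : Matrix W W ℕ) (m : ℕ) (hm : 1 ≤ m)
    -- `A` and `B` are essential: no zero rows and no zero columns
    (hAess : (∀ i, ∃ j, A i j ≠ 0) ∧ (∀ j, ∃ i, A i j ≠ 0))
    (hBess : (∀ i, ∃ j, B i j ≠ 0) ∧ (∀ j, ∃ i, B i j ≠ 0))
    (R : Matrix V W ℕ) (S : Matrix W V ℕ)
    (h1 : A ^ m = R * S) (h2 : B ^ m = S * R) (h3 : B * S = S * A) (h4 : A * R = R * B)
    -- the maps induced on the inductive limits by `Rᵀ`, `Sᵀ` and `Aᵀ`: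
    (Φ : DimGroup ((A.map (Nat.cast : ℕ → ℤ)).transpose) →ₗ[ℤ]
         DimGroup ((B.map (Nat.cast : ℕ → ℤ)).transpose))
    (hΦ : ∀ (k : ℕ) (x : V → ℤ),
      Φ (Module.DirectLimit.of ℤ ℕ _ (connMaps (A.map (Nat.cast : ℕ → ℤ)).transpose) k x) =
        Module.DirectLimit.of ℤ ℕ _ (connMaps (B.map (Nat.cast : ℕ → ℤ)).transpose) k
          ((R.map (Nat.cast : ℕ → ℤ)).transpose.mulVec x))
    (Ψ : DimGroup ((B.map (Nat.cast : ℕ → ℤ)).transpose) →ₗ[ℤ]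
         DimGroup ((A.map (Nat.cast : ℕ → ℤ)).transpose))
    (hΨ : ∀ (k : ℕ) (x : W → ℤ),
      Ψ (Module.DirectLimit.of ℤ ℕ _ (connMaps (B.map (Nat.cast : ℕ → ℤ)).transpose) k x) =
        Module.DirectLimit.of ℤ ℕ _ (connMaps (A.map (Nat.cast : ℕ → ℤ)).transpose) k
          ((S.map (Nat.cast : ℕ → ℤ)).transpose.mulVec x))
    (dA : Module.End ℤ (DimGroup ((A.map (Nat.cast : ℕ → ℤ)).transpose)))
    (hdA : ∀ (k : ℕ) (x : V → ℤ),
      dA (Module.DirectLimit.of ℤ ℕ _ (connMaps (A.map (Nat.cast : ℕ → ℤ)).transpose) k x) =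
        Module.DirectLimit.of ℤ ℕ _ (connMaps (A.map (Nat.cast : ℕ → ℤ)).transpose) k
          ((A.map (Nat.cast : ℕ → ℤ)).transpose.mulVec x)) :
    Ψ ∘ₗ Φ = dA ^ m := by
  have hpow : ∀ (n : ℕ) (k : ℕ) (x : V → ℤ),
      (dA ^ n) (Module.DirectLimit.of ℤ ℕ _ (connMaps (A.map (Nat.cast : ℕ → ℤ)).transpose) k x) =
        Module.DirectLimit.of ℤ ℕ _ (connMaps (A.map (Nat.cast : ℕ → ℤ)).transpose) k
          (((A.map (Nat.cast : ℕ → ℤ)).transpose ^ n).mulVec x) := by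
    intro n
    induction n with
    | zero => intro k x; simp
    | succ n ih =>
      intro k x
      rw [pow_succ, Module.End.mul_apply, hdA, ih, pow_succ,
        ← Matrix.mulVec_mulVec]
  refine LinearMap.ext fun z => ?_
  obtain ⟨k, x, rfl⟩ := Module.DirectLimit.exists_of z
  simp only [LinearMap.comp_apply, hΦ, hΨ, hpow]
  congr 1
  rw [Matrix.mulVec_mulVec, ← Matrix.transpose_mul, ← mapCast_mul, ← h1,
    mapCast_pow, Matrix.transpose_pow]
end
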